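/- arXiv:2107.07176 — 4 statements merged into one kernel-verified Lean document; each statement's English description precedes it below -/
import Mathlib

section
/- In the Tikhonov-Mann setting, for every n ∈ ℕ: d(y_{n+1},y_n) ≤ β_{n+1}·d(x_{n+1},x_n) + 2M·|β_{n+1}−β_n|. -/
/-!
Split `d(y_{n+1}, y_n)` at the point `(1 - β_{n+1}) u + β_{n+1} x_n`: by (W4) the first leg is at most
`β_{n+1} d(x_{n+1}, x_n)` and by (W2) the second is `|β_{n+1} - β_n| d(u, x_n)`. The iterates stay
in `C` and, since `W` cannot move a point farther from `p` than both endpoints and `T` fixes `p`,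
in the closed ball of radius `M` around `p`; hence `d(u, x_n) ≤ d(u, p) + d(p, x_n) ≤ 2M`.
-/

/-- A `W`-hyperbolic space: a metric space together with a convexity mapping
`W x y l` (written `(1-l)x + l y` in the paper) satisfying (W1)-(W4). -/
structure WHyp (X : Type*) [MetricSpace X] where
  W : X → X → ℝ → X
  W1 : ∀ x y z : X, ∀ l ∈ Set.Icc (0:ℝ) 1,
    dist z (W x y l) ≤ (1 - l) * dist z x + l * dist z y
  W2 : ∀ x y : X, ∀ l ∈ Set.Icc (0:ℝ) 1, ∀ l' ∈ Set.Icc (0:ℝ) 1,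
    dist (W x y l) (W x y l') = |l - l'| * dist x y
  W3 : ∀ x y : X, ∀ l ∈ Set.Icc (0:ℝ) 1, W x y l = W y x (1 - l)
  W4 : ∀ x y z w : X, ∀ l ∈ Set.Icc (0:ℝ) 1,
    dist (W x z l) (W y w l) ≤ (1 - l) * dist x y + l * dist z w

namespace WHyp

variable {X : Type*} [MetricSpace X] (H : WHyp X)

theorem dist_W_le_of_le {x y z : X} {l r : ℝ} (hl : l ∈ Set.Icc (0:ℝ) 1)
    (hx : dist z x ≤ r) (hy : dist z y ≤ r) : dist z (H.W x y l) ≤ r :=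
  have := hl.1
  have := hl.2
  calc dist z (H.W x y l) ≤ (1 - l) * dist z x + l * dist z y := H.W1 x y z l hl
    _ ≤ (1 - l) * r + l * r := by gcongr
    _ = r := by ring

theorem dist_W_W_le {u x x' : X} {l l' : ℝ} (hl : l ∈ Set.Icc (0:ℝ) 1)
    (hl' : l' ∈ Set.Icc (0:ℝ) 1) :
    dist (H.W u x l) (H.W u x' l') ≤ l * dist x x' + |l - l'| * dist u x' :=
  calc dist (H.W u x l) (H.W u x' l')
      ≤ dist (H.W u x l) (H.W u x' l) + dist (H.W u x' l) (H.W u x' l') := dist_triangle _ _ _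
    _ ≤ l * dist x x' + |l - l'| * dist u x' := by
      rw [H.W2 u x' l hl l' hl']
      simpa using H.W4 u u x x' l hl

end WHyp

section TikhonovMann

variable {X : Type*} [MetricSpace X]

theorem tikhonovMann_mem (H : WHyp X) {C : Set X}
    (hCconv : ∀ x ∈ C, ∀ y ∈ C, ∀ l ∈ Set.Icc (0:ℝ) 1, H.W x y l ∈ C)
    {T : X → X} (hTmaps : ∀ x ∈ C, T x ∈ C) {u : X} (huC : u ∈ C) {lam beta : ℕ → ℝ}
    (hlam : ∀ n, lam n ∈ Set.Icc (0:ℝ) 1) (hbeta : ∀ n, beta n ∈ Set.Icc (0:ℝ) 1)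
    {x y : ℕ → X} (hx0 : x 0 ∈ C)
    (hy : ∀ n, y n = H.W u (x n) (beta n))
    (hx : ∀ n, x (n + 1) = H.W (y n) (T (y n)) (lam n)) (n : ℕ) :
    x n ∈ C ∧ y n ∈ C := by
  have hyC {n : ℕ} (hxn : x n ∈ C) : y n ∈ C := hy n ▸ hCconv u huC (x n) hxn _ (hbeta n)
  induction n with
  | zero => exact ⟨hx0, hyC hx0⟩
  | succ k ih =>
    have hxk : x (k + 1) ∈ C := hx k ▸ hCconv _ ih.2 _ (hTmaps _ ih.2) _ (hlam k)
    exact ⟨hxk, hyC hxk⟩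

theorem tikhonovMann_dist_le (H : WHyp X) {C : Set X} {T : X → X}
    (hTne : ∀ x ∈ C, ∀ y ∈ C, dist (T x) (T y) ≤ dist x y)
    {p : X} (hpC : p ∈ C) (hpfix : T p = p) {u : X} {lam beta : ℕ → ℝ}
    (hlam : ∀ n, lam n ∈ Set.Icc (0:ℝ) 1) (hbeta : ∀ n, beta n ∈ Set.Icc (0:ℝ) 1)
    {x y : ℕ → X} (hyC : ∀ n, y n ∈ C)
    (hy : ∀ n, y n = H.W u (x n) (beta n))
    (hx : ∀ n, x (n + 1) = H.W (y n) (T (y n)) (lam n))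
    {r : ℝ} (hx0 : dist p (x 0) ≤ r) (hu : dist p u ≤ r) (n : ℕ) :
    dist p (x n) ≤ r := by
  induction n with
  | zero => exact hx0
  | succ k ih =>
    have hyk : dist p (y k) ≤ r := hy k ▸ H.dist_W_le_of_le (hbeta k) hu ih
    have hTyk : dist p (T (y k)) ≤ r :=
      calc dist p (T (y k)) = dist (T p) (T (y k)) := by rw [hpfix]
        _ ≤ dist p (y k) := hTne p hpC (y k) (hyC k)
        _ ≤ r := hyk
    exact hx k ▸ H.dist_W_le_of_le (hlam k) hyk hTyk

end TikhonovMann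

theorem tm_dist_yn_consecutive
    {X : Type*} [MetricSpace X] (H : WHyp X) (C : Set X)
    (hCconv : ∀ x ∈ C, ∀ y ∈ C, ∀ l ∈ Set.Icc (0:ℝ) 1, H.W x y l ∈ C)
    (T : X → X) (hTmaps : ∀ x ∈ C, T x ∈ C)
    (hTne : ∀ x ∈ C, ∀ y ∈ C, dist (T x) (T y) ≤ dist x y)
    (p : X) (hpC : p ∈ C) (hpfix : T p = p)
    (u : X) (huC : u ∈ C)
    (lam beta : ℕ → ℝ)
    (hlam : ∀ n, lam n ∈ Set.Icc (0:ℝ) 1) (hbeta : ∀ n, beta n ∈ Set.Icc (0:ℝ) 1)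
    (x y : ℕ → X) (hx0 : x 0 ∈ C)
    (hy : ∀ n, y n = H.W u (x n) (beta n))
    (hx : ∀ n, x (n + 1) = H.W (y n) (T (y n)) (lam n))
    (M : ℝ) (hM : M = max (dist (x 0) p) (dist u p)) :
    ∀ n : ℕ, dist (y (n + 1)) (y n) ≤
      beta (n + 1) * dist (x (n + 1)) (x n) + 2 * M * |beta (n + 1) - beta n| := by
  intro n
  have hyC n := (tikhonovMann_mem H hCconv hTmaps huC hlam hbeta hx0 hy hx n).2
  have hup : dist p u ≤ M := hM ▸ dist_comm u p ▸ le_max_right _ _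
  have hxp : dist p (x n) ≤ M :=
    tikhonovMann_dist_le H hTne hpC hpfix hlam hbeta hyC hy hx
      (hM ▸ dist_comm (x 0) p ▸ le_max_left _ _) hup n
  have hux : dist u (x n) ≤ 2 * M := by linarith [dist_triangle_left u (x n) p]
  calc dist (y (n + 1)) (y n)
      ≤ beta (n + 1) * dist (x (n + 1)) (x n) + |beta (n + 1) - beta n| * dist u (x n) := by
        rw [hy, hy]; exact H.dist_W_W_le (hbeta _) (hbeta _)
    _ ≤ beta (n + 1) * dist (x (n + 1)) (x n) + 2 * M * |beta (n + 1) - beta n| := by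
        rw [mul_comm (2 * M)]; gcongr
end

section
/- In the Tikhonov-Mann setting, for every n ∈ ℕ: d(x_{n+2},x_{n+1}) ≤ β_{n+1}·d(x_{n+1},x_n) + 2M·(|β_{n+1}−β_n| + |λ_{n+1}−λ_n|). -/
/-!
Since `T` is nonexpansive and fixes `p`, both steps `x n ↦ y n` and `y n ↦ x (n+1)` are convex
combinations of points within `M` of `p`, so the iterates stay in that ball and `dist u (x n)`,
`dist (y n) (T (y n))` are at most `2M`. Comparing `x (n+2)` and `x (n+1)` through the
intermediate point `W (y (n+1)) (T (y (n+1))) (lam n)` separates the change of the parameter `lam`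
(controlled by (W2)) from the change of the base point `y` (controlled by (W4) and
nonexpansiveness); `dist (y (n+1)) (y n)` splits in the same way through `W u (x n) (beta (n+1))`.
-/

theorem convex_combination_le {a b r l : ℝ} (hl : l ∈ Set.Icc (0:ℝ) 1) (ha : a ≤ r)
    (hb : b ≤ r) : (1 - l) * a + l * b ≤ r := by
  nlinarith [hl.1, hl.2]

namespace WHyp

variable {X : Type*} [MetricSpace X] (H : WHyp X)

def IsConvex (C : Set X) : Prop :=
  ∀ x ∈ C, ∀ y ∈ C, ∀ l ∈ Set.Icc (0:ℝ) 1, H.W x y l ∈ C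

theorem dist_W_le {x y z : X} {l r : ℝ} (hl : l ∈ Set.Icc (0:ℝ) 1)
    (hx : dist x z ≤ r) (hy : dist y z ≤ r) : dist (H.W x y l) z ≤ r := by
  rw [dist_comm] at hx hy ⊢
  exact (H.W1 x y z l hl).trans (convex_combination_le hl hx hy)

theorem dist_W_W_le_s7 {x y z w : X} {l r : ℝ} (hl : l ∈ Set.Icc (0:ℝ) 1)
    (hxy : dist x y ≤ r) (hzw : dist z w ≤ r) : dist (H.W x z l) (H.W y w l) ≤ r :=
  (H.W4 x y z w l hl).trans (convex_combination_le hl hxy hzw)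

theorem dist_W_W_left_le (u x y : X) {l : ℝ} (hl : l ∈ Set.Icc (0:ℝ) 1) :
    dist (H.W u x l) (H.W u y l) ≤ l * dist x y := by
  simpa using H.W4 u u x y l hl

theorem dist_W_W_param_le {x y : X} {l l' r : ℝ} (hl : l ∈ Set.Icc (0:ℝ) 1)
    (hl' : l' ∈ Set.Icc (0:ℝ) 1) (h : dist x y ≤ r) :
    dist (H.W x y l) (H.W x y l') ≤ |l - l'| * r := by
  rw [H.W2 x y l hl l' hl']
  gcongr

section TikhonovMann

variable {T : X → X} {u : X} {lam beta : ℕ → ℝ} {x y : ℕ → X}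

theorem tikhonovMann_mem {C : Set X} (hC : H.IsConvex C) (hTC : ∀ z ∈ C, T z ∈ C)
    (hu : u ∈ C) (hx0 : x 0 ∈ C)
    (hlam : ∀ n, lam n ∈ Set.Icc (0:ℝ) 1) (hbeta : ∀ n, beta n ∈ Set.Icc (0:ℝ) 1)
    (hy : ∀ n, y n = H.W u (x n) (beta n)) (hx : ∀ n, x (n + 1) = H.W (y n) (T (y n)) (lam n))
    (n : ℕ) : x n ∈ C ∧ y n ∈ C := by
  have hyC : ∀ n, x n ∈ C → y n ∈ C := fun n hxn => hy n ▸ hC u hu (x n) hxn (beta n) (hbeta n)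
  induction n with
  | zero => exact ⟨hx0, hyC 0 hx0⟩
  | succ n ih =>
    have hxC : x (n + 1) ∈ C := hx n ▸ hC _ ih.2 _ (hTC _ ih.2) (lam n) (hlam n)
    exact ⟨hxC, hyC _ hxC⟩

theorem tikhonovMann_dist_le {p : X} {r : ℝ} (hTp : ∀ n, dist (T (y n)) p ≤ dist (y n) p)
    (hu : dist u p ≤ r) (hx0 : dist (x 0) p ≤ r)
    (hlam : ∀ n, lam n ∈ Set.Icc (0:ℝ) 1) (hbeta : ∀ n, beta n ∈ Set.Icc (0:ℝ) 1)
    (hy : ∀ n, y n = H.W u (x n) (beta n)) (hx : ∀ n, x (n + 1) = H.W (y n) (T (y n)) (lam n))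
    (n : ℕ) : dist (x n) p ≤ r ∧ dist (y n) p ≤ r := by
  have hyp : ∀ n, dist (x n) p ≤ r → dist (y n) p ≤ r := fun n hxn =>
    hy n ▸ H.dist_W_le (hbeta n) hu hxn
  induction n with
  | zero => exact ⟨hx0, hyp 0 hx0⟩
  | succ n ih =>
    have hxp : dist (x (n + 1)) p ≤ r := hx n ▸ H.dist_W_le (hlam n) ih.2 ((hTp n).trans ih.2)
    exact ⟨hxp, hyp _ hxp⟩

theorem tikhonovMann_dist_y_succ_le (hbeta : ∀ n, beta n ∈ Set.Icc (0:ℝ) 1)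
    (hy : ∀ n, y n = H.W u (x n) (beta n)) (n : ℕ) :
    dist (y (n + 1)) (y n) ≤
      beta (n + 1) * dist (x (n + 1)) (x n) + |beta (n + 1) - beta n| * dist u (x n) := by
  rw [hy (n + 1), hy n]
  calc dist (H.W u (x (n + 1)) (beta (n + 1))) (H.W u (x n) (beta n))
      ≤ dist (H.W u (x (n + 1)) (beta (n + 1))) (H.W u (x n) (beta (n + 1)))
        + dist (H.W u (x n) (beta (n + 1))) (H.W u (x n) (beta n)) := dist_triangle _ _ _
    _ ≤ _ := add_le_add (H.dist_W_W_left_le _ _ _ (hbeta _))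
        (H.dist_W_W_param_le (hbeta _) (hbeta n) le_rfl)

theorem tikhonovMann_dist_x_succ_le (hlam : ∀ n, lam n ∈ Set.Icc (0:ℝ) 1)
    (hx : ∀ n, x (n + 1) = H.W (y n) (T (y n)) (lam n)) (n : ℕ)
    (hT : dist (T (y (n + 1))) (T (y n)) ≤ dist (y (n + 1)) (y n)) :
    dist (x (n + 2)) (x (n + 1)) ≤
      |lam (n + 1) - lam n| * dist (y (n + 1)) (T (y (n + 1))) + dist (y (n + 1)) (y n) := by
  rw [hx (n + 1), hx n]
  calc dist (H.W (y (n + 1)) (T (y (n + 1))) (lam (n + 1))) (H.W (y n) (T (y n)) (lam n))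
      ≤ dist (H.W (y (n + 1)) (T (y (n + 1))) (lam (n + 1)))
          (H.W (y (n + 1)) (T (y (n + 1))) (lam n))
        + dist (H.W (y (n + 1)) (T (y (n + 1))) (lam n)) (H.W (y n) (T (y n)) (lam n)) :=
        dist_triangle _ _ _
    _ ≤ _ := add_le_add (H.dist_W_W_param_le (hlam _) (hlam n) le_rfl)
        (H.dist_W_W_le_s7 (hlam n) le_rfl hT)

end TikhonovMann

end WHyp

theorem tm_dist_xn_consecutive
    {X : Type*} [MetricSpace X] (H : WHyp X) (C : Set X)
    (hCconv : ∀ x ∈ C, ∀ y ∈ C, ∀ l ∈ Set.Icc (0:ℝ) 1, H.W x y l ∈ C)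
    (T : X → X) (hTmaps : ∀ x ∈ C, T x ∈ C)
    (hTne : ∀ x ∈ C, ∀ y ∈ C, dist (T x) (T y) ≤ dist x y)
    (p : X) (hpC : p ∈ C) (hpfix : T p = p)
    (u : X) (huC : u ∈ C)
    (lam beta : ℕ → ℝ)
    (hlam : ∀ n, lam n ∈ Set.Icc (0:ℝ) 1) (hbeta : ∀ n, beta n ∈ Set.Icc (0:ℝ) 1)
    (x y : ℕ → X) (hx0 : x 0 ∈ C)
    (hy : ∀ n, y n = H.W u (x n) (beta n))
    (hx : ∀ n, x (n + 1) = H.W (y n) (T (y n)) (lam n))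
    (M : ℝ) (hM : M = max (dist (x 0) p) (dist u p)) :
    ∀ n : ℕ, dist (x (n + 2)) (x (n + 1)) ≤
      beta (n + 1) * dist (x (n + 1)) (x n) +
        2 * M * (|beta (n + 1) - beta n| + |lam (n + 1) - lam n|) := by
  intro n
  have hyC n : y n ∈ C := (H.tikhonovMann_mem hCconv hTmaps huC hx0 hlam hbeta hy hx n).2
  have hTp n : dist (T (y n)) p ≤ dist (y n) p := by
    simpa only [hpfix] using hTne _ (hyC n) p hpC
  have hup : dist u p ≤ M := hM ▸ le_max_right _ _
  have hbound := H.tikhonovMann_dist_le hTp hup (hM ▸ le_max_left _ _) hlam hbeta hy hx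
  have hux : dist u (x n) ≤ 2 * M := by
    linarith [dist_triangle_right u (x n) p, (hbound n).1]
  have hyT : dist (y (n + 1)) (T (y (n + 1))) ≤ 2 * M := by
    linarith [dist_triangle_right (y (n + 1)) (T (y (n + 1))) p, (hbound (n + 1)).2, hTp (n + 1)]
  have hstep := H.tikhonovMann_dist_x_succ_le hlam hx n (hTne _ (hyC _) _ (hyC n))
  have hystep := H.tikhonovMann_dist_y_succ_le hbeta hy n
  calc dist (x (n + 2)) (x (n + 1))
      ≤ |lam (n + 1) - lam n| * dist (y (n + 1)) (T (y (n + 1))) + dist (y (n + 1)) (y n) := hstep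
    _ ≤ |lam (n + 1) - lam n| * (2 * M)
        + (beta (n + 1) * dist (x (n + 1)) (x n) + |beta (n + 1) - beta n| * dist u (x n)) := by
        gcongr
    _ ≤ |lam (n + 1) - lam n| * (2 * M)
        + (beta (n + 1) * dist (x (n + 1)) (x n) + |beta (n + 1) - beta n| * (2 * M)) := by
        gcongr
    _ = beta (n + 1) * dist (x (n + 1)) (x n)
        + 2 * M * (|beta (n + 1) - beta n| + |lam (n + 1) - lam n|) := by ring
end

section
/- (Quantitative Xu lemma, divergence version) Let (a_n) be a sequence in [0,1] and (c_n), (s_n) sequences of nonnegative reals such that s_{n+1} ≤ (1−a_n)s_n + c_n for all n ∈ ℕ. Let L ∈ ℕ, L ≥ 1, be an upper bound on (s_n), let χ : ℕ → ℕ be a Cauchy modulus for the convergent series ∑ c_n, and let θ : ℕ → ℕ be a rate of divergence for the series ∑ a_n. Then Σ(k) = θ(χ(3k+2) + 1 + ⌈ln(3L(k+1))⌉) + 1 is a rate of convergence of (s_n) towards 0, i.e., s_n ≤ 1/(k+1) for all k ∈ ℕ and all n ≥ Σ(k). -/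
/-!
Unfolding the recursion from `N := χ(3k+2) + 1` to `n` and using `1 - x ≤ exp (-x)` gives
`s n ≤ exp (-∑_{N ≤ i < n} a i) * L + ∑_{N ≤ i < n} c i`. The error sum is at most `1/(3k+3)`
by the Cauchy modulus, and since `n > θ(N + M)` with `M = ⌈ln(3L(k+1))⌉`, the terms `a i ≤ 1`
before `N` contribute at most `N`, so `∑_{N ≤ i < n} a i ≥ M` and the first summand is at most
`1/(3(k+1))`.
-/

open Finset Real

def IsCauchyModulus (c : ℕ → ℝ) (χ : ℕ → ℕ) : Prop :=
  ∀ k : ℕ, ∀ n ≥ χ k, ∀ q : ℕ, ∑ i ∈ Icc (n + 1) (n + q), c i ≤ 1 / (k + 1)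

def IsRateOfDivergence (a : ℕ → ℝ) (θ : ℕ → ℕ) : Prop :=
  ∀ n : ℕ, (n : ℝ) ≤ ∑ i ∈ range (θ n + 1), a i

theorem IsCauchyModulus.sum_Ico_le {c : ℕ → ℝ} {χ : ℕ → ℕ} (hχ : IsCauchyModulus c χ)
    (k n : ℕ) : ∑ i ∈ Ico (χ k + 1) n, c i ≤ 1 / (k + 1) := by
  rcases le_or_gt n (χ k + 1) with hn | hn
  · rw [Ico_eq_empty_of_le hn, sum_empty]
    positivity
  have hIco : Ico (χ k + 1) n = Icc (χ k + 1) (χ k + (n - (χ k + 1))) := by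
    rw [← Ico_add_one_right_eq_Icc]
    congr 1
    omega
  simpa only [hIco] using hχ k (χ k) le_rfl (n - (χ k + 1))

theorem sum_range_le_of_le_one {a : ℕ → ℝ} (ha : ∀ i, a i ≤ 1) (n : ℕ) :
    ∑ i ∈ range n, a i ≤ n :=
  (sum_le_sum fun i _ => ha i).trans (by simp)

theorem IsRateOfDivergence.le_sum_Ico {a : ℕ → ℝ} {θ : ℕ → ℕ} (hθ : IsRateOfDivergence a θ)
    (ha : ∀ i, a i ∈ Set.Icc (0 : ℝ) 1) {N M n : ℕ} (hn : θ (N + M) < n) :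
    N ≤ n ∧ (M : ℝ) ≤ ∑ i ∈ Ico N n, a i := by
  have ha₁ : ∀ i, a i ≤ 1 := fun i => (ha i).2
  have hmono : ∑ i ∈ range (θ (N + M) + 1), a i ≤ ∑ i ∈ range n, a i :=
    sum_le_sum_of_subset_of_nonneg (range_subset_range.mpr hn) fun i _ _ => (ha i).1
  have hNM : ((N + M : ℕ) : ℝ) ≤ ∑ i ∈ range n, a i := (hθ (N + M)).trans hmono
  have hNn : N ≤ n := by
    have : ((N + M : ℕ) : ℝ) ≤ n := hNM.trans (sum_range_le_of_le_one ha₁ n)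
    exact_mod_cast (Nat.cast_le.mpr (Nat.le_add_right N M)).trans this
  refine ⟨hNn, ?_⟩
  rw [← sum_range_add_sum_Ico _ hNn] at hNM
  have := sum_range_le_of_le_one ha₁ N
  push_cast at hNM
  linarith

theorem exp_neg_natCeil_log_le_inv {x : ℝ} (hx : 0 < x) : exp (-⌈log x⌉₊) ≤ x⁻¹ := by
  rw [← exp_log (inv_pos.mpr hx), log_inv]
  exact exp_le_exp.mpr (neg_le_neg (Nat.le_ceil _))

theorem le_exp_neg_sum_mul_add_sum {a c s : ℕ → ℝ} (ha : ∀ n, 0 ≤ a n)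
    (hc : ∀ n, 0 ≤ c n) (hs : ∀ n, 0 ≤ s n)
    (hrec : ∀ n, s (n + 1) ≤ (1 - a n) * s n + c n) {m n : ℕ} (hmn : m ≤ n) :
    s n ≤ exp (-∑ i ∈ Ico m n, a i) * s m + ∑ i ∈ Ico m n, c i := by
  induction n, hmn using Nat.le_induction with
  | base => simp
  | succ n hmn ih =>
    set A := ∑ i ∈ Ico m n, a i
    set C := ∑ i ∈ Ico m n, c i
    have hC : 0 ≤ C := sum_nonneg fun i _ => hc i
    have hexp_le_one : exp (-a n) ≤ 1 := exp_le_one_iff.mpr (neg_nonpos.mpr (ha n))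
    rw [sum_Ico_succ_top hmn, sum_Ico_succ_top hmn, neg_add, exp_add]
    calc s (n + 1) ≤ (1 - a n) * s n + c n := hrec n
      _ ≤ exp (-a n) * s n + c n := by
          gcongr
          · exact hs n
          · linarith [add_one_le_exp (-a n)]
      _ ≤ exp (-a n) * (exp (-A) * s m + C) + c n := by gcongr
      _ ≤ exp (-A) * exp (-a n) * s m + (C + c n) := by
          nlinarith [mul_le_of_le_one_left hC hexp_le_one]

theorem quant_xu_divergence
    (a c s : ℕ → ℝ)
    (ha : ∀ n, a n ∈ Set.Icc (0:ℝ) 1)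
    (hc : ∀ n, 0 ≤ c n) (hs : ∀ n, 0 ≤ s n)
    (hrec : ∀ n, s (n + 1) ≤ (1 - a n) * s n + c n)
    (L : ℕ) (hL1 : 1 ≤ L) (hLub : ∀ n, s n ≤ (L : ℝ))
    (χ : ℕ → ℕ)
    (hχ : ∀ k : ℕ, ∀ n ≥ χ k, ∀ q : ℕ,
      ∑ i ∈ Finset.Icc (n + 1) (n + q), c i ≤ 1 / (k + 1))
    (θ : ℕ → ℕ)
    (hθ : ∀ n : ℕ, (n : ℝ) ≤ ∑ i ∈ Finset.range (θ n + 1), a i)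
    (Sg : ℕ → ℕ)
    (hSg : ∀ k : ℕ,
      Sg k = θ (χ (3 * k + 2) + 1 + ⌈Real.log (3 * L * (k + 1))⌉₊) + 1) :
    ∀ k : ℕ, ∀ n ≥ Sg k, s n ≤ 1 / (k + 1) := by
  intro k n hn
  rw [hSg k, ge_iff_le, Nat.add_one_le_iff] at hn
  obtain ⟨hNn, hM⟩ := IsRateOfDivergence.le_sum_Ico hθ ha hn
  have hL : (0 : ℝ) < L := by exact_mod_cast hL1
  have hpos : (0 : ℝ) < 3 * L * (k + 1) := by positivity
  have hdecay : exp (-∑ i ∈ Ico (χ (3 * k + 2) + 1) n, a i) * s (χ (3 * k + 2) + 1)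
      ≤ (3 * L * (k + 1) : ℝ)⁻¹ * L :=
    mul_le_mul ((exp_le_exp.mpr (neg_le_neg hM)).trans (exp_neg_natCeil_log_le_inv hpos))
      (hLub _) (hs _) (inv_pos.mpr hpos).le
  have herror := IsCauchyModulus.sum_Ico_le hχ (3 * k + 2) n
  calc s n ≤ _ := le_exp_neg_sum_mul_add_sum (fun i => (ha i).1) hc hs hrec hNn
    _ ≤ (3 * L * (k + 1) : ℝ)⁻¹ * L + 1 / ((3 * k + 2 : ℕ) + 1) := add_le_add hdecay herror
    _ = 2 / (3 * (k + 1)) := by field_simp; push_cast; ring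
    _ ≤ 1 / (k + 1) := by rw [div_le_div_iff₀ (by positivity) (by positivity)]; nlinarith
end

section
/- (Quantitative Xu lemma, product version) Let (a_n) be a sequence in [0,1] with a_n < 1 for all n, and (c_n), (s_n) sequences of nonnegative reals such that s_{n+1} ≤ (1−a_n)s_n + c_n for all n ∈ ℕ. Let L ∈ ℕ, L ≥ 1, be an upper bound on (s_n), let χ : ℕ → ℕ be a Cauchy modulus for the convergent series ∑ c_n, set A_n = ∏_{i=0}^{n}(1−a_i), and let γ : ℕ → ℕ be a rate of convergence of (A_n) towards 0. Suppose δ₀ : ℕ → ℕ takes positive values and satisfies 1/δ₀(k) ≤ A_{χ(3k+2)} for all k ∈ ℕ. Then Σ̃(k) = max{γ(3L(k+1)δ₀(k)−1), χ(3k+2)+1} + 1 is a rate of convergence of (s_n) towards 0, i.e., s_n ≤ 1/(k+1) for all k ∈ ℕ and all n ≥ Σ̃(k). -/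
/-!
Unrolling the recurrence from `m = χ(3k+2) + 1` to `n` gives
`s n ≤ (∏_{m ≤ i < n} (1 - a i)) * s m + ∑_{m ≤ i < n} c i`.
The sum is at most `1/(3(k+1))` by the Cauchy modulus. Since `A_{m-1} ≥ 1/δ₀(k)`, the product
is at most `δ₀(k) * A_{n-1}`, and `n - 1 ≥ γ(3L(k+1)δ₀(k) - 1)` makes `A_{n-1} ≤ 1/(3L(k+1)δ₀(k))`;
with `s m ≤ L` the first term is also at most `1/(3(k+1))`.
-/

open Finset

theorem le_prod_Ico_mul_add_sum_Ico {b c s : ℕ → ℝ}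
    (hb₀ : ∀ n, 0 ≤ b n) (hb₁ : ∀ n, b n ≤ 1) (hc : ∀ n, 0 ≤ c n)
    (hrec : ∀ n, s (n + 1) ≤ b n * s n + c n) {m n : ℕ} (hmn : m ≤ n) :
    s n ≤ (∏ i ∈ Ico m n, b i) * s m + ∑ i ∈ Ico m n, c i := by
  induction n, hmn using Nat.le_induction with
  | base => simp
  | succ n hmn ih =>
    have hsum : 0 ≤ ∑ i ∈ Ico m n, c i := sum_nonneg fun i _ => hc i
    rw [prod_Ico_succ_top hmn, sum_Ico_succ_top hmn]
    calc s (n + 1) ≤ b n * s n + c n := hrec n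
      _ ≤ b n * ((∏ i ∈ Ico m n, b i) * s m + ∑ i ∈ Ico m n, c i) + c n := by
        gcongr
        exact hb₀ n
      _ ≤ (∏ i ∈ Ico m n, b i) * b n * s m + (∑ i ∈ Ico m n, c i + c n) := by
        nlinarith [mul_le_of_le_one_left hsum (hb₁ n)]

theorem sum_Ico_succ_le_of_forall_sum_Icc_le {c : ℕ → ℝ} {N : ℕ} {ε : ℝ}
    (h : ∀ q, ∑ i ∈ Icc (N + 1) (N + q), c i ≤ ε) (n : ℕ) :
    ∑ i ∈ Ico (N + 1) n, c i ≤ ε := by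
  have hIco : Ico (N + 1) n = Icc (N + 1) (N + (n - (N + 1))) := by
    ext i
    simp only [mem_Ico, mem_Icc]
    omega
  exact hIco ▸ h _

theorem prod_Ico_le_mul_prod_range {b : ℕ → ℝ} (hb : ∀ n, 0 ≤ b n) {δ : ℝ} {m n : ℕ}
    (hδ : 1 ≤ δ * ∏ i ∈ range m, b i) (hmn : m ≤ n) :
    ∏ i ∈ Ico m n, b i ≤ δ * ∏ i ∈ range n, b i := by
  rw [← prod_range_mul_prod_Ico b hmn, ← mul_assoc]
  exact le_mul_of_one_le_left (prod_nonneg fun i _ => hb i) hδ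

theorem prod_range_le_of_rate {b : ℕ → ℝ} {γ : ℕ → ℕ}
    (hγ : ∀ k, ∀ n ≥ γ k, |∏ i ∈ range (n + 1), b i| ≤ 1 / (k + 1))
    {K n : ℕ} (hK : 0 < K) (hn : γ (K - 1) < n) :
    ∏ i ∈ range n, b i ≤ 1 / K := by
  obtain ⟨n, rfl⟩ := Nat.exists_eq_add_of_lt (Nat.zero_le _ |>.trans_lt hn)
  have h := hγ (K - 1) n (by omega)
  rw [Nat.cast_pred hK, sub_add_cancel] at h
  simpa using (le_abs_self _).trans h

theorem quant_xu_product_general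
    (a c s : ℕ → ℝ)
    (ha : ∀ n, a n ∈ Set.Icc (0:ℝ) 1)
    (hc : ∀ n, 0 ≤ c n)
    (hrec : ∀ n, s (n + 1) ≤ (1 - a n) * s n + c n)
    (L : ℕ) (hL1 : 1 ≤ L) (hLub : ∀ n, s n ≤ (L : ℝ))
    (χ : ℕ → ℕ)
    (hχ : ∀ k : ℕ, ∀ n ≥ χ k, ∀ q : ℕ,
      ∑ i ∈ Finset.Icc (n + 1) (n + q), c i ≤ 1 / (k + 1))
    (γ : ℕ → ℕ)
    (hγ : ∀ k : ℕ, ∀ n ≥ γ k,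
      |∏ i ∈ Finset.range (n + 1), (1 - a i)| ≤ 1 / (k + 1))
    (δ₀ : ℕ → ℕ) (hδ₀pos : ∀ k, 0 < δ₀ k)
    (hδ₀ : ∀ k : ℕ,
      1 / (δ₀ k : ℝ) ≤ ∏ i ∈ Finset.range (χ (3 * k + 2) + 1), (1 - a i))
    (Sg : ℕ → ℕ)
    (hSg : ∀ k : ℕ,
      Sg k = max (γ (3 * L * (k + 1) * δ₀ k - 1)) (χ (3 * k + 2) + 1) + 1) :
    ∀ k : ℕ, ∀ n ≥ Sg k, s n ≤ 1 / (k + 1) := by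
  intro k n hn
  rw [hSg k, ge_iff_le, Nat.add_one_le_iff, max_lt_iff] at hn
  set m := χ (3 * k + 2) + 1
  have hb₀ (i : ℕ) : 0 ≤ 1 - a i := sub_nonneg.2 (ha i).2
  have hδ : (0 : ℝ) < δ₀ k := by exact_mod_cast hδ₀pos k
  have hL : (L : ℝ) ≠ 0 := Nat.cast_ne_zero.2 (by omega)
  have hunroll := le_prod_Ico_mul_add_sum_Ico hb₀ (fun i => sub_le_self _ (ha i).1) hc hrec
    hn.2.le
  have hsum := sum_Ico_succ_le_of_forall_sum_Icc_le (hχ (3 * k + 2) _ le_rfl) n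
  have hprod := prod_Ico_le_mul_prod_range hb₀ ((div_le_iff₀' hδ).1 (hδ₀ k)) hn.2.le
  have hA := prod_range_le_of_rate hγ
    (Nat.mul_pos (Nat.mul_pos (by omega) k.succ_pos) (hδ₀pos k)) hn.1
  push_cast at hsum hA
  have hfirst : (∏ i ∈ Ico m n, (1 - a i)) * s m ≤ 1 / (3 * ((k : ℝ) + 1)) :=
    calc _ ≤ (∏ i ∈ Ico m n, (1 - a i)) * L :=
          mul_le_mul_of_nonneg_left (hLub m) (prod_nonneg fun i _ => hb₀ i)
      _ ≤ δ₀ k * (1 / (3 * L * ((k : ℝ) + 1) * δ₀ k)) * L := by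
          gcongr
          exact hprod.trans (by gcongr)
      _ = 1 / (3 * ((k : ℝ) + 1)) := by field_simp
  calc s n ≤ 1 / (3 * ((k : ℝ) + 1)) + 1 / (3 * k + 2 + 1) :=
        hunroll.trans (add_le_add hfirst hsum)
    _ ≤ 1 / (k + 1) := by
      rw [show (3 * k + 2 + 1 : ℝ) = 3 * (k + 1) by ring, ← add_div,
        div_le_div_iff₀ (by positivity) (by positivity)]
      nlinarith

theorem quant_xu_product
    (a c s : ℕ → ℝ)
    (ha : ∀ n, a n ∈ Set.Icc (0:ℝ) 1) (ha1 : ∀ n, a n < 1)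
    (hc : ∀ n, 0 ≤ c n) (hs : ∀ n, 0 ≤ s n)
    (hrec : ∀ n, s (n + 1) ≤ (1 - a n) * s n + c n)
    (L : ℕ) (hL1 : 1 ≤ L) (hLub : ∀ n, s n ≤ (L : ℝ))
    (χ : ℕ → ℕ)
    (hχ : ∀ k : ℕ, ∀ n ≥ χ k, ∀ q : ℕ,
      ∑ i ∈ Finset.Icc (n + 1) (n + q), c i ≤ 1 / (k + 1))
    (γ : ℕ → ℕ)
    (hγ : ∀ k : ℕ, ∀ n ≥ γ k,
      |∏ i ∈ Finset.range (n + 1), (1 - a i)| ≤ 1 / (k + 1))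
    (δ₀ : ℕ → ℕ) (hδ₀pos : ∀ k, 0 < δ₀ k)
    (hδ₀ : ∀ k : ℕ,
      1 / (δ₀ k : ℝ) ≤ ∏ i ∈ Finset.range (χ (3 * k + 2) + 1), (1 - a i))
    (Sg : ℕ → ℕ)
    (hSg : ∀ k : ℕ,
      Sg k = max (γ (3 * L * (k + 1) * δ₀ k - 1)) (χ (3 * k + 2) + 1) + 1) :
    ∀ k : ℕ, ∀ n ≥ Sg k, s n ≤ 1 / (k + 1) :=
  quant_xu_product_general a c s ha hc hrec L hL1 hLub χ hχ γ hγ δ₀ hδ₀pos hδ₀ Sg hSg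
end
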